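/- arXiv:2302.07859 — 4 statements merged into one kernel-verified Lean document; each statement's English description precedes it below -/
import Mathlib

section
/- For every finite simple graph G on n vertices, assign to each edge e the Turán weight w_T(e) := r_e/(2(r_e−1)), where r_e is the order of a largest clique of G containing e. Then w_T(G) := (2/n²)·∑_{e∈E(G)} w_T(e) ≤ 1/2. -/
open Finset
open scoped Classical

/-- The order of a largest clique of `G` containing both `u` and `v`. -/
noncomputable def cliqueOrder {V : Type} [Fintype V] (G : SimpleGraph V) (u v : V) : ℕ :=
  sSup {r : ℕ | ∃ s : Finset V, G.IsNClique r s ∧ u ∈ s ∧ v ∈ s}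

/-- `w(G) = (2/n²)·∑_{e ∈ E(G)} w(r_e)`, written as a sum over ordered pairs of
adjacent vertices (each edge is counted twice), divided by `n²`. -/
noncomputable def cliqueWeight {V : Type} [Fintype V] (G : SimpleGraph V) (w : ℕ → ℝ) : ℝ :=
  ((Fintype.card V : ℝ) ^ 2)⁻¹ *
    ∑ u : V, ∑ v : V, if G.Adj u v then w (cliqueOrder G u v) else 0

/-- The Turán weighting `w_T(r) = r / (2(r-1))`. -/
noncomputable def turanWeighting (r : ℕ) : ℝ := (r : ℝ) / (2 * ((r : ℝ) - 1))

/-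
Induction over vertex sets `s`, as in the classical proof of Turán's theorem, with cliques always
taken in `G`. Let `K` be a largest clique inside `s`, of order `k`. Every edge of `K` lies in a
clique of order `k`, and `(k - 1) · w_T(k) = k/2`, so the ordered pairs inside `K` carry weight at
most `k²/2`. A vertex `v ∈ s \ K` and its `d` neighbours in `K` form a clique of order `d + 1 ≤ k`
inside `s`; as `w_T` decreases on `r ≥ 2`, the pairs of `v` with `K` carry weight at most
`d · w_T(d + 1) = (d + 1)/2 ≤ k/2`. With `m = |s \ K|` and induction on `s \ K`, the total is at
most `k²/2 + 2 · m · k/2 + m²/2 = |s|²/2`.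
-/

lemma turanWeighting_nonneg (r : ℕ) : 0 ≤ turanWeighting r := by
  unfold turanWeighting
  rcases Nat.lt_or_ge r 2 with hr | hr
  · interval_cases r <;> norm_num
  · have : (2 : ℝ) ≤ r := by exact_mod_cast hr
    exact div_nonneg (by positivity) (by linarith)

lemma turanWeighting_antitoneOn : AntitoneOn turanWeighting {r | 2 ≤ r} := by
  intro a (ha : 2 ≤ a) b (hb : 2 ≤ b) hab
  have ha' : (2 : ℝ) ≤ a := by exact_mod_cast ha
  have hab' : (a : ℝ) ≤ b := by exact_mod_cast hab
  unfold turanWeighting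
  rw [div_le_div_iff₀ (by linarith) (by linarith)]
  nlinarith

lemma sub_one_mul_turanWeighting_le (r : ℕ) : ((r : ℝ) - 1) * turanWeighting r ≤ r / 2 := by
  rcases eq_or_ne ((r : ℝ) - 1) 0 with h | h
  · rw [h, zero_mul]
    positivity
  · unfold turanWeighting
    exact le_of_eq (by field_simp)

lemma exists_maximum_isClique_subset {α : Type*} (G : SimpleGraph α) (s : Finset α) :
    ∃ K ⊆ s, G.IsClique (K : Set α) ∧
      ∀ t ⊆ s, G.IsClique (t : Set α) → t.card ≤ K.card := by
  obtain ⟨K, hK, hmax⟩ :=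
    (s.powerset.filter fun t : Finset α => G.IsClique (t : Set α)).exists_max_image
      Finset.card ⟨∅, by simp⟩
  rw [mem_filter, mem_powerset] at hK
  exact ⟨K, hK.1, hK.2, fun t hts ht => hmax t (mem_filter.2 ⟨mem_powerset.2 hts, ht⟩)⟩

section

variable {V : Type} [Fintype V] (G : SimpleGraph V)

lemma card_le_cliqueOrder {t : Finset V} (ht : G.IsClique (t : Set V)) {u v : V}
    (hu : u ∈ t) (hv : v ∈ t) : t.card ≤ cliqueOrder G u v :=
  le_csSup ⟨Fintype.card V, fun _ ⟨s, hs, _⟩ => hs.2 ▸ s.card_le_univ⟩ ⟨t, ⟨ht, rfl⟩, hu, hv⟩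

lemma cliqueOrder_comm (u v : V) : cliqueOrder G u v = cliqueOrder G v u := by
  unfold cliqueOrder
  congr 1
  ext r
  exact exists_congr fun s => and_congr_right' and_comm

noncomputable def edgeTuranWeight (u v : V) : ℝ :=
  if G.Adj u v then turanWeighting (cliqueOrder G u v) else 0

lemma edgeTuranWeight_comm (u v : V) : edgeTuranWeight G u v = edgeTuranWeight G v u := by
  simp only [edgeTuranWeight, G.adj_comm u v, cliqueOrder_comm G u v]

lemma edgeTuranWeight_self (v : V) : edgeTuranWeight G v v = 0 := by
  simp [edgeTuranWeight]

lemma edgeTuranWeight_le_of_isClique {t : Finset V} (ht : G.IsClique (t : Set V)) {u v : V}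
    (hu : u ∈ t) (hv : v ∈ t) (huv : u ≠ v) : edgeTuranWeight G u v ≤ turanWeighting t.card := by
  have ht2 : 2 ≤ t.card := one_lt_card.2 ⟨u, hu, v, hv, huv⟩
  unfold edgeTuranWeight
  split_ifs
  · exact turanWeighting_antitoneOn ht2 (ht2.trans (card_le_cliqueOrder G ht hu hv))
      (card_le_cliqueOrder G ht hu hv)
  · exact turanWeighting_nonneg _

lemma sum_edgeTuranWeight_le_of_isClique {t : Finset V} (ht : G.IsClique (t : Set V)) {v : V}
    (hv : v ∈ t) : ∑ u ∈ t, edgeTuranWeight G v u ≤ t.card / 2 :=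
  calc ∑ u ∈ t, edgeTuranWeight G v u = ∑ u ∈ t.erase v, edgeTuranWeight G v u :=
        (sum_erase t (edgeTuranWeight_self G v)).symm
    _ ≤ ∑ _u ∈ t.erase v, turanWeighting t.card := sum_le_sum fun u hu =>
        edgeTuranWeight_le_of_isClique G ht hv (mem_of_mem_erase hu) (ne_of_mem_erase hu).symm
    _ = ((t.card : ℝ) - 1) * turanWeighting t.card := by
        rw [sum_const, card_erase_of_mem hv, nsmul_eq_mul, Nat.cast_pred (card_pos.2 ⟨v, hv⟩)]
    _ ≤ t.card / 2 := sub_one_mul_turanWeighting_le _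

lemma sum_sum_edgeTuranWeight_le_of_isClique {t : Finset V} (ht : G.IsClique (t : Set V)) :
    ∑ u ∈ t, ∑ v ∈ t, edgeTuranWeight G u v ≤ (t.card : ℝ) ^ 2 / 2 :=
  calc ∑ u ∈ t, ∑ v ∈ t, edgeTuranWeight G u v ≤ ∑ _u ∈ t, (t.card : ℝ) / 2 :=
        sum_le_sum fun _ hu => sum_edgeTuranWeight_le_of_isClique G ht hu
    _ = (t.card : ℝ) ^ 2 / 2 := by rw [sum_const, nsmul_eq_mul]; ring

lemma sum_edgeTuranWeight_le_of_maximum {s K : Finset V} (hKs : K ⊆ s)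
    (hK : G.IsClique (K : Set V)) (hmax : ∀ t ⊆ s, G.IsClique (t : Set V) → t.card ≤ K.card)
    {v : V} (hv : v ∈ s) (hvK : v ∉ K) :
    ∑ u ∈ K, edgeTuranWeight G v u ≤ K.card / 2 := by
  set D := K.filter (G.Adj v)
  have hD : G.IsClique (insert v D : Set V) :=
    (hK.subset (coe_subset.2 (filter_subset _ K))).insert fun u hu _ => (mem_filter.1 hu).2
  rw [← coe_insert] at hD
  calc ∑ u ∈ K, edgeTuranWeight G v u = ∑ u ∈ insert v D, edgeTuranWeight G v u := by
        rw [sum_insert fun h => hvK (mem_filter.1 h).1, edgeTuranWeight_self, zero_add,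
          sum_filter_of_ne (f := edgeTuranWeight G v) fun u _ h =>
            by_contra fun hnadj => h (if_neg hnadj)]
    _ ≤ (insert v D).card / 2 := sum_edgeTuranWeight_le_of_isClique G hD (mem_insert_self v D)
    _ ≤ K.card / 2 := by
        rw [div_le_div_iff_of_pos_right two_pos]
        exact_mod_cast hmax _ (insert_subset hv ((filter_subset _ K).trans hKs)) hD

lemma sum_sum_edgeTuranWeight_eq_of_subset {s K : Finset V} (hKs : K ⊆ s) :
    ∑ u ∈ s, ∑ v ∈ s, edgeTuranWeight G u v = ∑ u ∈ K, ∑ v ∈ K, edgeTuranWeight G u v +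
      2 * ∑ v ∈ s \ K, ∑ u ∈ K, edgeTuranWeight G v u +
      ∑ u ∈ s \ K, ∑ v ∈ s \ K, edgeTuranWeight G u v := by
  have hcomm : ∑ u ∈ K, ∑ v ∈ s \ K, edgeTuranWeight G u v =
      ∑ v ∈ s \ K, ∑ u ∈ K, edgeTuranWeight G v u := by
    rw [sum_comm]
    simp only [edgeTuranWeight_comm G _ _]
  simp only [← sum_sdiff hKs, sum_add_distrib]
  rw [hcomm]
  ring

theorem sum_sum_edgeTuranWeight_le (s : Finset V) :
    ∑ u ∈ s, ∑ v ∈ s, edgeTuranWeight G u v ≤ (s.card : ℝ) ^ 2 / 2 := by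
  induction s using Finset.strongInduction with
  | H s ih =>
  rcases s.eq_empty_or_nonempty with rfl | ⟨x, hx⟩
  · simp
  obtain ⟨K, hKs, hK, hmax⟩ := exists_maximum_isClique_subset G s
  have hKne : K.Nonempty :=
    card_pos.1 (hmax {x} (singleton_subset_iff.2 hx) (by simp))
  have hinside := sum_sum_edgeTuranWeight_le_of_isClique G hK
  have hcross : ∑ v ∈ s \ K, ∑ u ∈ K, edgeTuranWeight G v u ≤ (s \ K).card * (K.card / 2 : ℝ) :=
    (sum_le_card_nsmul _ _ _ fun v hv => sum_edgeTuranWeight_le_of_maximum G hKs hK hmax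
      (mem_sdiff.1 hv).1 (mem_sdiff.1 hv).2).trans_eq (nsmul_eq_mul _ _)
  have hrest := ih (s \ K) (sdiff_ssubset hKs hKne)
  have hcard : (s.card : ℝ) = K.card + (s \ K).card := by
    rw [← card_sdiff_add_card_eq_card hKs]
    push_cast
    ring
  rw [sum_sum_edgeTuranWeight_eq_of_subset G hKs, hcard]
  linarith

end

/-- Theorem (Turán weights): for every graph `G`, `w_T(G) ≤ 1/2`. -/
theorem cliqueWeight_turanWeighting_le_half (n : ℕ) (G : SimpleGraph (Fin n)) :
    cliqueWeight G turanWeighting ≤ 1 / 2 := by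
  have h := sum_sum_edgeTuranWeight_le G univ
  rw [card_univ] at h
  have h' := inv_mul_le_one_of_le₀ (by linarith : 2 * ∑ u, ∑ v, edgeTuranWeight G u v ≤
    (Fintype.card (Fin n) : ℝ) ^ 2) (by positivity)
  unfold cliqueWeight
  simp only [edgeTuranWeight] at h'
  linarith
end

section
/- Let 0 < a ≤ 1 and F = {K_3^a, K_4^0}, i.e., F-free weighted graphs are K_4-free graphs containing no triangle all three of whose edge weights exceed a. Then d(F) = 2/(4−a). -/
open Finset
open scoped Classical

/-- A weighted clique `(r, f)`: a size `r` together with weights on its pairs. -/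
structure WeightedClique where
  r : ℕ
  f : Fin r → Fin r → ℝ

/-- `K_r^a`: the weighted clique of size `r` with all weights equal to `a`. -/
def constWeightedClique (r : ℕ) (a : ℝ) : WeightedClique := ⟨r, fun _ _ => a⟩

/-- An edge-weighted graph `(G, w)` contains the weighted clique `C`. -/
def ContainsWC {n : ℕ} (G : SimpleGraph (Fin n)) (w : Fin n → Fin n → ℝ)
    (C : WeightedClique) : Prop :=
  ∃ φ : Fin C.r → Fin n, Function.Injective φ ∧
    ∀ i j : Fin C.r, i < j → G.Adj (φ i) (φ j) ∧ C.f i j < w (φ i) (φ j)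

/-- `(G, w)` is `F`-free: it contains no member of `F`. -/
def WCFree {n : ℕ} (G : SimpleGraph (Fin n)) (w : Fin n → Fin n → ℝ)
    (F : Set WeightedClique) : Prop :=
  ∀ C ∈ F, ¬ ContainsWC G w C

/-- `w(G) = (2/n²)·∑_{e ∈ E(G)} w(e)`, written as a sum over ordered pairs of
adjacent vertices (each edge counted twice), divided by `n²`. -/
noncomputable def wSum {n : ℕ} (G : SimpleGraph (Fin n)) (w : Fin n → Fin n → ℝ) : ℝ :=
  ((n : ℝ) ^ 2)⁻¹ * ∑ u : Fin n, ∑ v : Fin n, if G.Adj u v then w u v else 0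

/-- `β_n(F)`: the supremum of `w(G)` over all `F`-free edge-weighted graphs on
`n` vertices, with edge weights in `[0,1]`. -/
noncomputable def betaWC (F : Set WeightedClique) (n : ℕ) : ℝ :=
  sSup { x : ℝ | ∃ (G : SimpleGraph (Fin n)) (w : Fin n → Fin n → ℝ),
    (∀ u v, w u v = w v u) ∧
    (∀ u v, G.Adj u v → w u v ∈ Set.Icc (0 : ℝ) 1) ∧
    WCFree G w F ∧ x = wSum G w }

/-!
`w(G)` is the quadratic form `xᵀ W x` of the weight matrix `W` at the uniform vector
`x = 1/n`. If two vertices of the support of a point `x` of the simplex span a pair of weight `0`,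
the form is affine along the segment moving mass between them, so one endpoint, which has smaller
support, is at least as good (Zykov symmetrization, as in Motzkin–Straus). Iterating, the form is
bounded by its value at a point supported on a clique of positive-weight pairs, i.e. on at most
three vertices since there is no `K₄`; one edge of such a triangle weighs at most `a`, and an
elementary inequality bounds the form by `2 / (4 - a)`. Conversely the complete tripartite graph
with parts of relative sizes `1, 1, 2 - a` (over `4 - a`), weight `a` between the two equal parts
and `1` elsewhere, has no `K₄` and no heavy triangle, and its weight tends to `2 / (4 - a)`.
-/

open Matrix

lemma SimpleGraph.IsClique.card_lt_of_cliqueFree {α : Type*} {G : SimpleGraph α} {k : ℕ}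
    {s : Finset α} (hG : G.CliqueFree k) (hs : G.IsClique (s : Set α)) : #s < k := by
  by_contra! h
  obtain ⟨t, hts, ht⟩ := Finset.exists_subset_card_eq h
  exact hG t ⟨hs.subset (by simpa using hts), ht⟩

lemma Finset.exists_eq_insert_insert_singleton_of_card_eq_three {α : Type*} [DecidableEq α]
    {s : Finset α} (hs : #s = 3) {p q : α} (hp : p ∈ s) (hq : q ∈ s) (hpq : p ≠ q) :
    ∃ r, r ≠ p ∧ r ≠ q ∧ s = {p, q, r} := by
  have hq' : q ∈ s.erase p := mem_erase.2 ⟨hpq.symm, hq⟩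
  obtain ⟨r, hr⟩ := card_eq_one.1 (by
    rw [card_erase_of_mem hq', card_erase_of_mem hp, hs] : #((s.erase p).erase q) = 1)
  have hr' : r ∈ (s.erase p).erase q := hr ▸ mem_singleton_self r
  refine ⟨r, (mem_erase.1 (mem_erase.1 hr').2).1, (mem_erase.1 hr').1, ?_⟩
  rw [← insert_erase hp, ← insert_erase hq', hr]

lemma Finset.sum_comp_eq_sum_card_mul {α β R : Type*} [Fintype α] [Fintype β]
    [DecidableEq β] [NonAssocSemiring R] (p : α → β) (f : β → R) : ∑ u, f (p u) = ∑ i, #{u | p u = i} * f i := by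
  rw [← Finset.sum_fiberwise' univ p f]
  simp only [Finset.sum_const, nsmul_eq_mul]

lemma Fin.card_filter_val_mem_Ico {n lo hi : ℕ} (h : hi ≤ n) :
    #{u : Fin n | (u : ℕ) ∈ Ico lo hi} = hi - lo := by
  rw [← Finset.card_map Fin.valEmbedding, ← Nat.card_Ico lo hi]
  congr 1
  ext x
  simp only [Finset.mem_map, Finset.mem_filter, Finset.mem_univ, true_and,
    Fin.valEmbedding_apply, Finset.mem_Ico]
  exact ⟨fun ⟨u, hu, hux⟩ => hux ▸ hu, fun hx => ⟨⟨x, by omega⟩, hx, rfl⟩⟩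

/-- With `s = y + z` the left side is at most `2 (x s + a s² / 4)`, and
`(4 - a) (x s + a s² / 4) = u - u² / 4 ≤ 1` for `u = (4 - a) s`. -/
lemma two_mul_triangle_le {a w₁ w₂ w₃ x y z : ℝ} (ha : 0 ≤ a) (ha4 : a < 4)
    (hw₁ : w₁ ≤ 1) (hw₂ : w₂ ≤ 1) (hw₃ : w₃ ≤ a) (hx : 0 ≤ x) (hy : 0 ≤ y) (hz : 0 ≤ z)
    (hxyz : x + y + z = 1) :
    2 * (w₁ * x * y + w₂ * x * z + w₃ * y * z) ≤ 2 / (4 - a) := by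
  have h4a : 0 < 4 - a := by linarith
  rw [le_div_iff₀ h4a]
  obtain rfl : x = 1 - y - z := by linarith
  nlinarith [sq_nonneg ((4 - a) * (y + z) - 2),
    mul_nonneg (mul_nonneg ha h4a.le) (sq_nonneg (y - z)),
    mul_nonneg (mul_nonneg h4a.le (mul_nonneg (sub_nonneg.2 hw₁) hx)) hy,
    mul_nonneg (mul_nonneg h4a.le (mul_nonneg (sub_nonneg.2 hw₂) hx)) hz,
    mul_nonneg (mul_nonneg h4a.le (mul_nonneg (sub_nonneg.2 hw₃) hy)) hz]

section QuadraticForm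

variable {ι : Type*}

def aboveGraph (W : Matrix ι ι ℝ) (c : ℝ) : SimpleGraph ι where
  Adj i j := i ≠ j ∧ c < W i j ∧ c < W j i
  symm := ⟨fun _ _ h => ⟨h.1.symm, h.2.2, h.2.1⟩⟩
  loopless := ⟨fun _ h => h.1 rfl⟩

@[simp]
lemma aboveGraph_adj {W : Matrix ι ι ℝ} {c : ℝ} {i j : ι} :
    (aboveGraph W c).Adj i j ↔ i ≠ j ∧ c < W i j ∧ c < W j i :=
  Iff.rfl

variable [Fintype ι]

lemma dotProduct_mulVec_add_smul (W : Matrix ι ι ℝ) (x d : ι → ℝ) (t : ℝ) :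
    (x + t • d) ⬝ᵥ W *ᵥ (x + t • d) =
      x ⬝ᵥ W *ᵥ x + t * (x ⬝ᵥ W *ᵥ d + d ⬝ᵥ W *ᵥ x) + t ^ 2 * (d ⬝ᵥ W *ᵥ d) := by
  simp only [mulVec_add, mulVec_smul, dotProduct_add, add_dotProduct, dotProduct_smul,
    smul_dotProduct, smul_eq_mul]
  ring

lemma Matrix.IsSymm.dotProduct_mulVec_comm {W : Matrix ι ι ℝ} (hW : W.IsSymm)
    (x y : ι → ℝ) : x ⬝ᵥ W *ᵥ y = y ⬝ᵥ W *ᵥ x := by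
  rw [dotProduct_mulVec, ← mulVec_transpose, hW.eq, dotProduct_comm]

/-- As `W` vanishes on `{u, v} × {u, v}`, the form is affine along `x + t • (eᵥ - eᵤ)`, with
slope `2 ((W x) v - (W x) u)`; after possibly swapping `u` and `v`, moving all the mass of `u`
to `v` does not decrease it. -/
lemma exists_mem_stdSimplex_le_support_ssubset {W : Matrix ι ι ℝ} (hW : W.IsSymm)
    {x : ι → ℝ} (hx : x ∈ stdSimplex ℝ ι) {u v : ι} (huv : u ≠ v) (hxu : x u ≠ 0)
    (hxv : x v ≠ 0) (hWu : W u u = 0) (hWv : W v v = 0) (hWuv : W u v = 0) :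
    ∃ y ∈ stdSimplex ℝ ι, x ⬝ᵥ W *ᵥ x ≤ y ⬝ᵥ W *ᵥ y ∧
      Function.support y ⊂ Function.support x := by
  wlog hg : (W *ᵥ x) u ≤ (W *ᵥ x) v generalizing u v
  · exact this huv.symm hxv hxu hWv hWu (hW.apply u v ▸ hWuv) (le_of_not_ge hg)
  set d : ι → ℝ := Pi.single v 1 - Pi.single u 1
  have hy : ∀ i,
      (x + x u • d) i = if i = u then 0 else if i = v then x v + x u else x i := by
    intro i
    by_cases hiu : i = u
    · subst hiu; simp [d, huv]
    · by_cases hiv : i = v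
      · subst hiv; simp [d, hiu]
      · simp [d, hiu, hiv]
  refine ⟨x + x u • d, ⟨fun i => ?_, ?_⟩, ?_, ?_⟩
  · rw [hy]
    split_ifs
    exacts [le_rfl, add_nonneg (hx.1 v) (hx.1 u), hx.1 i]
  · simp [d, Finset.sum_add_distrib, ← Finset.mul_sum, Finset.sum_sub_distrib, hx.2]
  · have hdd : d ⬝ᵥ W *ᵥ d = 0 := by
      simp [d, mulVec_sub, sub_dotProduct, dotProduct_sub, mulVec_single, hWu, hWv, hWuv,
        hW.apply u v ▸ hWuv]
    have hxd : d ⬝ᵥ W *ᵥ x = (W *ᵥ x) v - (W *ᵥ x) u := by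
      simp [d, sub_dotProduct]
    rw [dotProduct_mulVec_add_smul, hdd, hW.dotProduct_mulVec_comm x d, hxd]
    nlinarith [hx.1 u]
  · refine Set.ssubset_iff_of_subset (fun i hi => ?_) |>.2 ⟨u, hxu, by simp [hy]⟩
    simp only [Function.mem_support, hy] at hi ⊢
    split_ifs at hi with hiu hiv
    exacts [absurd rfl hi, hiv ▸ hxv, hi]

lemma exists_mem_stdSimplex_le_pairwise_ne_zero {W : Matrix ι ι ℝ} (hW : W.IsSymm)
    (hdiag : ∀ i, W i i = 0) {x : ι → ℝ} (hx : x ∈ stdSimplex ℝ ι) :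
    ∃ y ∈ stdSimplex ℝ ι, x ⬝ᵥ W *ᵥ x ≤ y ⬝ᵥ W *ᵥ y ∧
      (Function.support y).Pairwise fun i j => W i j ≠ 0 := by
  induction hk : (Function.support x).ncard using Nat.strong_induction_on generalizing x with
  | _ k ih =>
  by_cases hpair : (Function.support x).Pairwise fun i j => W i j ≠ 0
  · exact ⟨x, hx, le_rfl, hpair⟩
  obtain ⟨u, hu, v, hv, huv, hWuv⟩ : ∃ u ∈ Function.support x, ∃ v ∈ Function.support x,
      u ≠ v ∧ W u v = 0 := by
    simpa [Set.Pairwise] using hpair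
  obtain ⟨y, hy, hxy, hyx⟩ :=
    exists_mem_stdSimplex_le_support_ssubset hW hx huv hu hv (hdiag u) (hdiag v) hWuv
  obtain ⟨z, hz, hyz, hzW⟩ := ih _ (hk ▸ Set.ncard_lt_ncard hyx) hy rfl
  exact ⟨z, hz, hxy.trans hyz, hzW⟩

lemma dotProduct_mulVec_eq_sum_support (W : Matrix ι ι ℝ) (y : ι → ℝ) :
    y ⬝ᵥ W *ᵥ y = ∑ i ∈ (Function.support y).toFinset, ∑ j ∈ (Function.support y).toFinset,
      W i j * y i * y j := by
  have hout : ∀ i ∉ (Function.support y).toFinset, y i = 0 := fun i hi => by simpa using hi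
  rw [dotProduct, ← Finset.sum_subset (subset_univ _) fun i _ hi => by simp [hout i hi]]
  refine Finset.sum_congr rfl fun i _ => ?_
  rw [mulVec, dotProduct, Finset.mul_sum,
    ← Finset.sum_subset (subset_univ _) fun j _ hj => by simp [hout j hj]]
  exact Finset.sum_congr rfl fun j _ => by ring

theorem dotProduct_mulVec_le_of_cliqueFree {a : ℝ} (ha : 0 ≤ a) (ha4 : a < 4)
    {W : Matrix ι ι ℝ} (hW : W.IsSymm) (hdiag : ∀ i, W i i = 0) (hW0 : ∀ i j, 0 ≤ W i j)
    (hW1 : ∀ i j, W i j ≤ 1) (h4 : (aboveGraph W 0).CliqueFree 4)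
    (h3 : (aboveGraph W a).CliqueFree 3) {y : ι → ℝ} (hy : y ∈ stdSimplex ℝ ι)
    (hyW : (Function.support y).Pairwise fun i j => W i j ≠ 0) :
    y ⬝ᵥ W *ᵥ y ≤ 2 / (4 - a) := by
  have hQ := dotProduct_mulVec_eq_sum_support W y
  set S := (Function.support y).toFinset
  have hS : ∑ i ∈ S, y i = 1 := by
    rw [Finset.sum_subset (subset_univ S) fun i _ hi => by simpa [S] using hi, hy.2]
  have hclique : (aboveGraph W 0).IsClique (S : Set ι) := by
    rw [Set.coe_toFinset]
    intro i hi j hj hij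
    exact aboveGraph_adj.2 ⟨hij, (hW0 i j).lt_of_ne (hyW hi hj hij).symm,
      (hW0 j i).lt_of_ne (hyW hj hi hij.symm).symm⟩
  have hcard := hclique.card_lt_of_cliqueFree h4
  clear_value S
  interval_cases hk : #S
  · simp [card_eq_zero.1 hk] at hS
  · obtain ⟨p, rfl⟩ := card_eq_one.1 hk
    simp [hQ, hdiag, div_nonneg, (by linarith : (0 : ℝ) ≤ 4 - a)]
  · obtain ⟨p, q, hpq, rfl⟩ := card_eq_two.1 hk
    simp only [Finset.sum_pair hpq] at hQ hS
    rw [hQ, hdiag, hdiag, hW.apply p q]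
    linarith [two_mul_triangle_le (w₂ := 0) (w₃ := 0) (z := 0) ha ha4 (hW1 p q) zero_le_one
      ha (hy.1 p) (hy.1 q) le_rfl (by linarith)]
  · obtain ⟨p, hp, q, hq, hpq, hlight⟩ :
        ∃ p ∈ S, ∃ q ∈ S, p ≠ q ∧ ¬ (aboveGraph W a).Adj p q := by
      simpa [SimpleGraph.isNClique_iff, hk, SimpleGraph.IsClique, Set.Pairwise] using h3 S
    have hWpq : W p q ≤ a := by
      simpa [hpq, hW.apply p q] using hlight
    obtain ⟨r, hrp, hrq, rfl⟩ :=
      Finset.exists_eq_insert_insert_singleton_of_card_eq_three hk hp hq hpq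
    simp only [mem_insert, mem_singleton, sum_insert, sum_singleton, hpq, hrp.symm, hrq.symm,
      or_self, not_false_eq_true] at hQ hS
    rw [hQ]
    simp only [hdiag, hW.apply p q, hW.apply p r, hW.apply q r]
    linarith [two_mul_triangle_le ha ha4 (hW1 p r) (hW1 q r) hWpq (hy.1 r) (hy.1 p) (hy.1 q)
      (by linarith)]

end QuadraticForm

section WeightedGraph

variable {m n : ℕ}

noncomputable def edgeWeightMatrix (G : SimpleGraph (Fin n)) (w : Fin n → Fin n → ℝ) :
    Matrix (Fin n) (Fin n) ℝ :=
  Matrix.of fun u v => if G.Adj u v then w u v else 0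

lemma wSum_eq_dotProduct_mulVec (G : SimpleGraph (Fin n)) (w : Fin n → Fin n → ℝ) :
    wSum G w = (fun _ => (n : ℝ)⁻¹) ⬝ᵥ edgeWeightMatrix G w *ᵥ fun _ => (n : ℝ)⁻¹ := by
  simp only [wSum, edgeWeightMatrix, dotProduct, mulVec, of_apply, Finset.mul_sum]
  refine Finset.sum_congr rfl fun u _ => Finset.sum_congr rfl fun v _ => ?_
  ring

lemma cliqueFree_aboveGraph_of_not_containsWC {G : SimpleGraph (Fin n)}
    {w : Fin n → Fin n → ℝ} {r : ℕ} {c : ℝ} (hc : 0 ≤ c)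
    (h : ¬ ContainsWC G w (constWeightedClique r c)) :
    (aboveGraph (edgeWeightMatrix G w) c).CliqueFree r := by
  rw [SimpleGraph.cliqueFree_iff]
  refine ⟨fun f => h ⟨f, f.injective, fun i j hij => ?_⟩⟩
  have hadj : c < if G.Adj (f i) (f j) then w (f i) (f j) else 0 :=
    (f.toHom.map_adj (v := i) (w := j) hij.ne).2.1
  by_cases hG : G.Adj (f i) (f j)
  · exact ⟨hG, by rwa [if_pos hG] at hadj⟩
  · rw [if_neg hG] at hadj
    linarith

theorem wSum_le_of_wcFree {a : ℝ} (ha : 0 ≤ a) (ha4 : a < 4)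
    {G : SimpleGraph (Fin n)} {w : Fin n → Fin n → ℝ} (hw : ∀ u v, w u v = w v u)
    (hw01 : ∀ u v, G.Adj u v → w u v ∈ Set.Icc (0 : ℝ) 1)
    (hfree : WCFree G w {constWeightedClique 3 a, constWeightedClique 4 0}) :
    wSum G w ≤ 2 / (4 - a) := by
  have h4a : 0 < 4 - a := by linarith
  rcases n.eq_zero_or_pos with rfl | hn
  · simp only [wSum, univ_eq_empty, sum_empty, mul_zero]
    positivity
  set W := edgeWeightMatrix G w
  have hW : W.IsSymm := IsSymm.ext fun u v => by simp [W, edgeWeightMatrix, G.adj_comm, hw]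
  have hdiag : ∀ u, W u u = 0 := fun u => by simp [W, edgeWeightMatrix]
  have hW0 : ∀ u v, 0 ≤ W u v := fun u v => by
    simp only [W, edgeWeightMatrix, of_apply]
    split_ifs with h
    exacts [(hw01 u v h).1, le_rfl]
  have hW1 : ∀ u v, W u v ≤ 1 := fun u v => by
    simp only [W, edgeWeightMatrix, of_apply]
    split_ifs with h
    exacts [(hw01 u v h).2, zero_le_one]
  have hunif : (fun _ => (n : ℝ)⁻¹) ∈ stdSimplex ℝ (Fin n) :=
    ⟨fun _ => by positivity, by simp [hn.ne']⟩
  obtain ⟨y, hy, hle, hyW⟩ := exists_mem_stdSimplex_le_pairwise_ne_zero hW hdiag hunif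
  rw [wSum_eq_dotProduct_mulVec]
  exact hle.trans <| dotProduct_mulVec_le_of_cliqueFree ha ha4 hW hdiag hW0 hW1
    (cliqueFree_aboveGraph_of_not_containsWC le_rfl (hfree _ (by simp)))
    (cliqueFree_aboveGraph_of_not_containsWC ha (hfree _ (by simp))) hy hyW

lemma ContainsWC.of_comap {H : SimpleGraph (Fin m)} {p : Fin n → Fin m}
    {M : Fin m → Fin m → ℝ} {C : WeightedClique}
    (h : ContainsWC (H.comap p) (fun u v => M (p u) (p v)) C) : ContainsWC H M C := by
  obtain ⟨φ, -, hφ⟩ := h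
  refine ⟨p ∘ φ, fun i j hij => ?_, hφ⟩
  by_contra hne
  rcases lt_or_gt_of_ne hne with h | h
  · exact (hφ i j h).1.ne (G := H) hij
  · exact (hφ j i h).1.ne (G := H) hij.symm

lemma wSum_comap (H : SimpleGraph (Fin m)) (p : Fin n → Fin m) (M : Fin m → Fin m → ℝ) :
    wSum (H.comap p) (fun u v => M (p u) (p v)) =
      (fun i => (#{u | p u = i} : ℝ) / n) ⬝ᵥ edgeWeightMatrix H M *ᵥ
        fun i => (#{u | p u = i} : ℝ) / n := by
  set E := edgeWeightMatrix H M
  set c : Fin m → ℝ := fun i => #{u | p u = i}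
  have hE : ∀ u v, (if (H.comap p).Adj u v then M (p u) (p v) else 0) = E (p u) (p v) :=
    fun _ _ => rfl
  calc wSum (H.comap p) (fun u v => M (p u) (p v))
      = ((n : ℝ) ^ 2)⁻¹ * ∑ u, ∑ j, c j * E (p u) j := by
        simp only [wSum, hE, Finset.sum_comp_eq_sum_card_mul p, c]
    _ = ((n : ℝ) ^ 2)⁻¹ * ∑ i, c i * ∑ j, c j * E i j :=
        congrArg _ (Finset.sum_comp_eq_sum_card_mul p fun i => ∑ j, c j * E i j)
    _ = _ := by
        simp only [dotProduct, mulVec, Finset.mul_sum]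
        refine Finset.sum_congr rfl fun i _ => Finset.sum_congr rfl fun j _ => ?_
        ring

end WeightedGraph

section Tripartite

variable {n s : ℕ}

def tripartitePart (s : ℕ) (u : Fin n) : Fin 3 :=
  if (u : ℕ) < s then 0 else if (u : ℕ) < 2 * s then 1 else 2

def tripartiteWeights (a : ℝ) : Fin 3 → Fin 3 → ℝ :=
  ![![0, a, 1], ![a, 0, 1], ![1, 1, 0]]

def tripartiteDensity (a t : ℝ) : ℝ :=
  2 * a * t ^ 2 + 4 * t * (1 - 2 * t)

lemma wcFree_top_tripartiteWeights (a : ℝ) :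
    WCFree (⊤ : SimpleGraph (Fin 3)) (tripartiteWeights a)
      {constWeightedClique 3 a, constWeightedClique 4 0} := by
  simp only [WCFree, Set.mem_insert_iff, Set.mem_singleton_iff, forall_eq_or_imp, forall_eq,
    ContainsWC, constWeightedClique]
  refine ⟨?_, ?_⟩
  · rintro ⟨φ, hφ, hlt⟩
    obtain ⟨i, hi⟩ := Finite.injective_iff_surjective.1 hφ 0
    obtain ⟨j, hj⟩ := Finite.injective_iff_surjective.1 hφ 1
    have hij : i ≠ j := by
      rintro rfl
      exact absurd (hi.symm.trans hj) (by decide)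
    rcases lt_or_gt_of_ne hij with h | h
    · simpa [tripartiteWeights, hi, hj] using (hlt i j h).2
    · simpa [tripartiteWeights, hi, hj] using (hlt j i h).2
  · rintro ⟨φ, hφ, -⟩
    simpa using Fintype.card_le_of_injective φ hφ

lemma card_tripartitePart (hs : 2 * s ≤ n) (i : Fin 3) :
    #{u : Fin n | tripartitePart s u = i} = ![s, s, n - 2 * s] i := by
  have hIco : ∀ lo hi, hi ≤ n →
      (∀ u : Fin n, tripartitePart s u = i ↔ (u : ℕ) ∈ Ico lo hi) →
      #{u : Fin n | tripartitePart s u = i} = hi - lo := fun lo hi h hiff => by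
    simp only [hiff, Fin.card_filter_val_mem_Ico h]
  fin_cases i
  · refine (hIco 0 s (by omega) fun u => ?_).trans (Nat.sub_zero s)
    simp only [tripartitePart, Finset.mem_Ico]
    split_ifs <;> simp <;> omega
  · refine (hIco s (2 * s) hs fun u => ?_).trans (by simp; omega)
    simp only [tripartitePart, Finset.mem_Ico]
    split_ifs <;> simp <;> omega
  · refine hIco (2 * s) n le_rfl fun u => ?_
    simp only [tripartitePart, Finset.mem_Ico]
    split_ifs <;> simp <;> omega

lemma wSum_tripartite (a : ℝ) (hn : 0 < n) (hs : 2 * s ≤ n) :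
    wSum ((⊤ : SimpleGraph (Fin 3)).comap (tripartitePart (n := n) s))
      (fun u v => tripartiteWeights a (tripartitePart s u) (tripartitePart s v)) =
      tripartiteDensity a (s / n) := by
  rw [wSum_comap]
  simp [card_tripartitePart hs, dotProduct, mulVec, Fin.sum_univ_three, edgeWeightMatrix,
    tripartiteWeights, tripartiteDensity, Nat.cast_sub hs]
  field_simp
  ring

end Tripartite

section Density

variable {a : ℝ} {n : ℕ}

theorem betaWC_le (ha : 0 ≤ a) (ha4 : a < 4) (n : ℕ) :
    betaWC {constWeightedClique 3 a, constWeightedClique 4 0} n ≤ 2 / (4 - a) :=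
  Real.sSup_le
    (fun _ ⟨_, _, hw, hw01, hfree, hx⟩ => hx ▸ wSum_le_of_wcFree ha ha4 hw hw01 hfree)
    (div_nonneg zero_le_two (by linarith))

theorem wSum_le_betaWC (ha : 0 ≤ a) (ha4 : a < 4) {G : SimpleGraph (Fin n)}
    {w : Fin n → Fin n → ℝ} (hw : ∀ u v, w u v = w v u)
    (hw01 : ∀ u v, G.Adj u v → w u v ∈ Set.Icc (0 : ℝ) 1)
    (hfree : WCFree G w {constWeightedClique 3 a, constWeightedClique 4 0}) :
    wSum G w ≤ betaWC {constWeightedClique 3 a, constWeightedClique 4 0} n :=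
  le_csSup ⟨2 / (4 - a), fun _ ⟨_, _, hw, hw01, hfree, hx⟩ =>
    hx ▸ wSum_le_of_wcFree ha ha4 hw hw01 hfree⟩ ⟨G, w, hw, hw01, hfree, rfl⟩

theorem le_betaWC_of_two_mul_le (ha : 0 ≤ a) (ha1 : a ≤ 1) {s : ℕ} (hn : 0 < n)
    (hs : 2 * s ≤ n) :
    tripartiteDensity a (s / n) ≤ betaWC {constWeightedClique 3 a, constWeightedClique 4 0} n := by
  rw [← wSum_tripartite a hn hs]
  refine wSum_le_betaWC ha (by linarith) (fun u v => ?_) (fun u v _ => ?_)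
    fun C hC h => wcFree_top_tripartiteWeights a C hC h.of_comap
  all_goals
    generalize tripartitePart s u = i
    generalize tripartitePart s v = j
    fin_cases i <;> fin_cases j <;> simp [tripartiteWeights, ha, ha1]

lemma two_mul_floor_le (ha1 : a ≤ 1) (n : ℕ) : 2 * ⌊(4 - a)⁻¹ * n⌋₊ ≤ n := by
  have hfloor : (⌊(4 - a)⁻¹ * n⌋₊ : ℝ) ≤ (4 - a)⁻¹ * n := Nat.floor_le (by
    have : 0 < 4 - a := by linarith
    positivity)
  have hthird : (4 - a)⁻¹ * (n : ℝ) ≤ n / 3 := by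
    rw [inv_mul_eq_div]
    gcongr
    linarith
  exact_mod_cast (by linarith : (2 * ⌊(4 - a)⁻¹ * n⌋₊ : ℝ) ≤ n)

lemma tendsto_tripartiteDensity_floor (ha4 : a < 4) :
    Filter.Tendsto (fun n : ℕ => tripartiteDensity a (⌊(4 - a)⁻¹ * n⌋₊ / n)) Filter.atTop
      (nhds (2 / (4 - a))) := by
  have h4a : 0 < 4 - a := by linarith
  have hval : tripartiteDensity a (4 - a)⁻¹ = 2 / (4 - a) := by
    rw [tripartiteDensity]
    field_simp
    ring
  have hcont : Continuous (tripartiteDensity a) := by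
    unfold tripartiteDensity
    fun_prop
  rw [← hval]
  refine (hcont.tendsto _).comp ?_
  exact (tendsto_nat_floor_mul_div_atTop (inv_nonneg.2 h4a.le)).comp tendsto_natCast_atTop_atTop

end Density

/-- For `0 < a ≤ 1` and `F = {K₃^a, K₄^0}` (no `K₄`, and no triangle with all three
edge weights exceeding `a`), we have `d(F) = 2/(4-a)`. -/
theorem dWC_heavy_triangle (a : ℝ) (ha : 0 < a) (ha1 : a ≤ 1) :
    Filter.Tendsto (betaWC {constWeightedClique 3 a, constWeightedClique 4 0})
      Filter.atTop (nhds (2 / (4 - a))) := by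
  have ha4 : a < 4 := by linarith
  refine tendsto_of_tendsto_of_tendsto_of_le_of_le' (tendsto_tripartiteDensity_floor ha4)
    tendsto_const_nhds ?_ (Filter.Eventually.of_forall (betaWC_le ha.le ha4))
  filter_upwards [Filter.eventually_gt_atTop 0] with n hn
  exact le_betaWC_of_two_mul_le ha.le ha1 hn (two_mul_floor_le ha1 n)
end

section
/- For every δ > 0 there exists n_0 such that the following holds for all n ≥ n_0: if G is an n-vertex K_4-free graph with an edge weighting w : E(G) → (0,1] such that G contains no triangle all three of whose edges have weight strictly greater than 3/4, then w(G) = (2/n²)·∑_{e∈E(G)} w(e) ≤ 8/13 + δ. -/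
open Finset
open scoped Classical

section Aux

variable {n : ℕ}

/-- Expansion of a symmetric quadratic form by pulling one vertex out of the
index set. -/
lemma qf_expand1 (c : Fin n → Fin n → ℝ) (hsym : ∀ a b, c a b = c b a)
    (hdiag : ∀ a, c a a = 0) (S : Finset (Fin n)) (u : Fin n) (hu : u ∈ S)
    (x : Fin n → ℝ) :
    ∑ a ∈ S, ∑ b ∈ S, c a b * x a * x b
      = 2 * (x u * ∑ b ∈ S.erase u, c u b * x b)
        + ∑ a ∈ S.erase u, ∑ b ∈ S.erase u, c a b * x a * x b := by
  have hS : insert u (S.erase u) = S := Finset.insert_erase hu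
  have hu' : u ∉ S.erase u := Finset.notMem_erase u S
  have hsplit : ∀ F : Fin n → ℝ, ∑ a ∈ S, F a = F u + ∑ a ∈ S.erase u, F a := by
    intro F
    conv_lhs => rw [← hS]
    rw [Finset.sum_insert hu']
  simp only [hsplit]
  rw [Finset.sum_add_distrib]
  have h1 : ∑ b ∈ S.erase u, c u b * x u * x b
      = x u * ∑ b ∈ S.erase u, c u b * x b := by
    rw [Finset.mul_sum]; exact Finset.sum_congr rfl (fun b _ => by ring)
  have h2 : ∑ a ∈ S.erase u, c a u * x a * x u
      = x u * ∑ b ∈ S.erase u, c u b * x b := by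
    rw [Finset.mul_sum]
    refine Finset.sum_congr rfl (fun a _ => ?_)
    rw [hsym a u]; ring
  rw [h1, h2, hdiag u]
  ring

/-- The weight redistribution map: all weight of `v` is moved onto `u`. -/
noncomputable def shiftFun (x : Fin n → ℝ) (u v : Fin n) : Fin n → ℝ :=
  fun i => if i = u then x u + x v else if i = v then 0 else x i

lemma shiftFun_nonneg (x : Fin n → ℝ) (u v : Fin n) (hx : ∀ i, 0 ≤ x i) :
    ∀ i, 0 ≤ shiftFun x u v i := by
  intro i
  unfold shiftFun
  split_ifs
  · exact add_nonneg (hx u) (hx v)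
  · exact le_refl 0
  · exact hx i

lemma shiftFun_sum (x : Fin n → ℝ) (S : Finset (Fin n)) (u v : Fin n)
    (hu : u ∈ S) (hv : v ∈ S) (huv : u ≠ v) :
    ∑ i ∈ S.erase v, shiftFun x u v i = ∑ i ∈ S, x i := by
  have hu' : u ∈ S.erase v := Finset.mem_erase.mpr ⟨huv, hu⟩
  have h1 : ∀ F : Fin n → ℝ, ∑ a ∈ S, F a = F v + ∑ a ∈ S.erase v, F a := by
    intro F
    conv_lhs => rw [← Finset.insert_erase hv]
    rw [Finset.sum_insert (Finset.notMem_erase v S)]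
  have h2 : ∀ F : Fin n → ℝ,
      ∑ a ∈ S.erase v, F a = F u + ∑ a ∈ (S.erase v).erase u, F a := by
    intro F
    conv_lhs => rw [← Finset.insert_erase hu']
    rw [Finset.sum_insert (Finset.notMem_erase u _)]
  rw [h2, h1 x, h2 x]
  have hcong : ∑ a ∈ (S.erase v).erase u, shiftFun x u v a
      = ∑ a ∈ (S.erase v).erase u, x a := by
    refine Finset.sum_congr rfl (fun a ha => ?_)
    have h1 := (Finset.mem_erase.mp ha).1
    have h2 := (Finset.mem_erase.mp (Finset.mem_erase.mp ha).2).1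
    simp [shiftFun, h1, h2]
  rw [hcong]
  have : shiftFun x u v u = x u + x v := by simp [shiftFun]
  rw [this]
  ring

/-- Zykov-type shifting: if `u, v` are "non-adjacent" (`c u v = 0`) then moving
all weight from `v` to `u` (when `u`'s weighted link is at least `v`'s) does not
decrease the quadratic form. -/
lemma qf_shift_le (c : Fin n → Fin n → ℝ) (hsym : ∀ a b, c a b = c b a)
    (hdiag : ∀ a, c a a = 0)
    (S : Finset (Fin n)) (u v : Fin n) (hu : u ∈ S) (hv : v ∈ S) (huv : u ≠ v)
    (hcuv : c u v = 0) (x : Fin n → ℝ) (hx : ∀ i, 0 ≤ x i)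
    (hAB : ∑ b ∈ (S.erase v).erase u, c v b * x b
        ≤ ∑ b ∈ (S.erase v).erase u, c u b * x b) :
    ∑ a ∈ S, ∑ b ∈ S, c a b * x a * x b
      ≤ ∑ a ∈ S.erase v, ∑ b ∈ S.erase v,
          c a b * shiftFun x u v a * shiftFun x u v b := by
  have hu' : u ∈ S.erase v := Finset.mem_erase.mpr ⟨huv, hu⟩
  set T := (S.erase v).erase u with hT
  set A := ∑ b ∈ T, c u b * x b with hA
  set B := ∑ b ∈ T, c v b * x b with hB
  have e1 := qf_expand1 c hsym hdiag S v hv x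
  have e2 := qf_expand1 c hsym hdiag (S.erase v) u hu' x
  have h3 : ∑ b ∈ S.erase v, c v b * x b = c v u * x u + B := by
    conv_lhs => rw [← Finset.insert_erase hu']
    rw [Finset.sum_insert (Finset.notMem_erase u _)]
  have hcvu : c v u = 0 := by rw [hsym v u]; exact hcuv
  have e3 := qf_expand1 c hsym hdiag (S.erase v) u hu' (shiftFun x u v)
  have hTx : ∀ a, a ∈ T → shiftFun x u v a = x a := by
    intro a ha
    have h1 := (Finset.mem_erase.mp ha).1
    have h2 := (Finset.mem_erase.mp (Finset.mem_erase.mp ha).2).1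
    simp [shiftFun, h1, h2]
  have hTsum : ∑ a ∈ T, ∑ b ∈ T, c a b * shiftFun x u v a * shiftFun x u v b
      = ∑ a ∈ T, ∑ b ∈ T, c a b * x a * x b := by
    refine Finset.sum_congr rfl (fun a ha => Finset.sum_congr rfl (fun b hb => ?_))
    rw [hTx a ha, hTx b hb]
  have hAsum : ∑ b ∈ T, c u b * shiftFun x u v b = A := by
    refine Finset.sum_congr rfl (fun b hb => ?_)
    rw [hTx b hb]
  have hxu : shiftFun x u v u = x u + x v := by simp [shiftFun]
  rw [e1, e2, h3, hcvu]
  rw [e3, hTsum, hAsum, hxu]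
  have key : x v * B ≤ x v * A := mul_le_mul_of_nonneg_left hAB (hx v)
  nlinarith [key]

/-- The core three-variable optimization: edge coefficients at most `4`, at
least one at most `3`, over the simplex, the quadratic form is at most `32/13`. -/
lemma tri_ineq (cab cad cbd xa xb xd : ℝ)
    (h1 : cab ≤ 4) (h2 : cad ≤ 4) (h3 : cbd ≤ 4)
    (hone : cab ≤ 3 ∨ cad ≤ 3 ∨ cbd ≤ 3)
    (ha : 0 ≤ xa) (hb : 0 ≤ xb) (hd : 0 ≤ xd) (hsum : xa + xb + xd = 1) :
    cab * xa * xb + cad * xa * xd + (cab * xb * xa + cbd * xb * xd)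
      + (cad * xd * xa + cbd * xd * xb) ≤ 32/13 := by
  have pab : 0 ≤ xa * xb := mul_nonneg ha hb
  have pad : 0 ≤ xa * xd := mul_nonneg ha hd
  have pbd : 0 ≤ xb * xd := mul_nonneg hb hd
  have qab : cab * (xa * xb) ≤ 4 * (xa * xb) := mul_le_mul_of_nonneg_right h1 pab
  have qad : cad * (xa * xd) ≤ 4 * (xa * xd) := mul_le_mul_of_nonneg_right h2 pad
  have qbd : cbd * (xb * xd) ≤ 4 * (xb * xd) := mul_le_mul_of_nonneg_right h3 pbd
  rcases hone with h | h | h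
  · have q : cab * (xa * xb) ≤ 3 * (xa * xb) := mul_le_mul_of_nonneg_right h pab
    nlinarith [sq_nonneg (xa + xb - 8/13), sq_nonneg (xa - xb)]
  · have q : cad * (xa * xd) ≤ 3 * (xa * xd) := mul_le_mul_of_nonneg_right h pad
    nlinarith [sq_nonneg (xa + xd - 8/13), sq_nonneg (xa - xd)]
  · have q : cbd * (xb * xd) ≤ 3 * (xb * xd) := mul_le_mul_of_nonneg_right h pbd
    nlinarith [sq_nonneg (xb + xd - 8/13), sq_nonneg (xb - xd)]

lemma base3 (c : Fin n → Fin n → ℝ) (hsym : ∀ a b, c a b = c b a)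
    (hdiag : ∀ a, c a a = 0) (hle : ∀ a b, c a b ≤ 4)
    (hH : ∀ a b d : Fin n, a ≠ b → a ≠ d → b ≠ d →
      c a b ≤ 3 ∨ c a d ≤ 3 ∨ c b d ≤ 3)
    (a b d : Fin n) (hab : a ≠ b) (had : a ≠ d) (hbd : b ≠ d)
    (x : Fin n → ℝ) (hx : ∀ i, 0 ≤ x i)
    (hsum : ∑ i ∈ ({a, b, d} : Finset (Fin n)), x i = 1) :
    ∑ p ∈ ({a, b, d} : Finset (Fin n)), ∑ q ∈ ({a, b, d} : Finset (Fin n)),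
      c p q * x p * x q ≤ 32/13 := by
  have hsplit3 : ∀ F : Fin n → ℝ,
      ∑ i ∈ ({a, b, d} : Finset (Fin n)), F i = F a + F b + F d := by
    intro F
    rw [show ({a, b, d} : Finset (Fin n)) = insert a (insert b {d}) from rfl,
      Finset.sum_insert (by simp [hab, had]),
      Finset.sum_insert (by simp [hbd]), Finset.sum_singleton]
    ring
  rw [hsplit3] at hsum
  simp only [hsplit3]
  rw [hdiag a, hdiag b, hdiag d, hsym b a, hsym d a, hsym d b]
  have := tri_ineq (c a b) (c a d) (c b d) (x a) (x b) (x d)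
    (hle a b) (hle a d) (hle b d) (hH a b d hab had hbd)
    (hx a) (hx b) (hx d) hsum
  nlinarith [this]

lemma base2 (c : Fin n → Fin n → ℝ) (hsym : ∀ a b, c a b = c b a)
    (hdiag : ∀ a, c a a = 0) (hle : ∀ a b, c a b ≤ 4)
    (a b : Fin n) (hab : a ≠ b)
    (x : Fin n → ℝ) (hx : ∀ i, 0 ≤ x i)
    (hsum : ∑ i ∈ ({a, b} : Finset (Fin n)), x i = 1) :
    ∑ p ∈ ({a, b} : Finset (Fin n)), ∑ q ∈ ({a, b} : Finset (Fin n)),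
      c p q * x p * x q ≤ 32/13 := by
  rw [Finset.sum_pair hab] at hsum
  simp only [Finset.sum_pair hab]
  rw [hdiag a, hdiag b, hsym b a]
  have hp : 0 ≤ x a * x b := mul_nonneg (hx a) (hx b)
  have q : c a b * (x a * x b) ≤ 4 * (x a * x b) :=
    mul_le_mul_of_nonneg_right (hle a b) hp
  nlinarith [sq_nonneg (x a - x b)]

/-- The weighted Motzkin–Straus bound: a symmetric coefficient matrix with
entries in `[0,4]`, vanishing on the diagonal, such that among any four distinct
vertices some pair has coefficient `0` (K₄-freeness) and among any three
distinct vertices some pair has coefficient at most `3` (no heavy triangle),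
has quadratic form at most `32/13` over the simplex. -/
lemma key_induction (c : Fin n → Fin n → ℝ) (hsym : ∀ a b, c a b = c b a)
    (hdiag : ∀ a, c a a = 0) (hle : ∀ a b, c a b ≤ 4)
    (hK4 : ∀ a b c' d : Fin n, a ≠ b → a ≠ c' → a ≠ d → b ≠ c' → b ≠ d → c' ≠ d →
      c a b = 0 ∨ c a c' = 0 ∨ c a d = 0 ∨ c b c' = 0 ∨ c b d = 0 ∨ c c' d = 0)
    (hH : ∀ a b d : Fin n, a ≠ b → a ≠ d → b ≠ d →
      c a b ≤ 3 ∨ c a d ≤ 3 ∨ c b d ≤ 3) :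
    ∀ (k : ℕ) (S : Finset (Fin n)) (x : Fin n → ℝ), S.card ≤ k →
      (∀ i, 0 ≤ x i) → ∑ i ∈ S, x i = 1 →
      ∑ a ∈ S, ∑ b ∈ S, c a b * x a * x b ≤ 32/13 := by
  intro k
  induction k with
  | zero =>
    intro S x hcard hx hsum
    rw [Nat.le_zero, Finset.card_eq_zero] at hcard
    subst hcard
    simp at hsum
  | succ k ih =>
    intro S x hcard hx hsum
    by_cases hz : ∃ u ∈ S, ∃ v ∈ S, u ≠ v ∧ c u v = 0
    · obtain ⟨u, hu, v, hv, huv, hcuv⟩ := hz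
      have hvS : 1 ≤ S.card := Finset.card_pos.mpr ⟨v, hv⟩
      rcases le_total (∑ b ∈ (S.erase v).erase u, c v b * x b)
          (∑ b ∈ (S.erase v).erase u, c u b * x b) with hAB | hAB
      · have h1 := qf_shift_le c hsym hdiag S u v hu hv huv hcuv x hx hAB
        have h2 := ih (S.erase v) (shiftFun x u v)
          (by rw [Finset.card_erase_of_mem hv]; omega)
          (shiftFun_nonneg x u v hx)
          (by rw [shiftFun_sum x S u v hu hv huv]; exact hsum)
        linarith
      · have hcvu : c v u = 0 := by rw [hsym]; exact hcuv
        have hAB' : ∑ b ∈ (S.erase u).erase v, c u b * x b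
            ≤ ∑ b ∈ (S.erase u).erase v, c v b * x b := by
          rwa [Finset.erase_right_comm] at hAB
        have h1 := qf_shift_le c hsym hdiag S v u hv hu huv.symm hcvu x hx hAB'
        have h2 := ih (S.erase u) (shiftFun x v u)
          (by rw [Finset.card_erase_of_mem hu]; omega)
          (shiftFun_nonneg x v u hx)
          (by rw [shiftFun_sum x S v u hv hu huv.symm]; exact hsum)
        linarith
    · push_neg at hz
      have hcard3 : S.card ≤ 3 := by
        by_contra hgt
        push_neg at hgt
        obtain ⟨t, htS, ht4⟩ := Finset.exists_subset_card_eq (show 4 ≤ S.card by omega)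
        obtain ⟨a, t3, hat3, rfl, ht3⟩ := Finset.card_eq_succ.mp (by
          rw [ht4] : t.card = 3 + 1)
        obtain ⟨b, c', d, hbc, hbd, hcd, rfl⟩ := Finset.card_eq_three.mp ht3
        have haS : a ∈ S := htS (by simp)
        have hbS : b ∈ S := htS (by simp)
        have hcS : c' ∈ S := htS (by simp)
        have hdS : d ∈ S := htS (by simp)
        have hab : a ≠ b := by rintro rfl; simp at hat3
        have hac : a ≠ c' := by rintro rfl; simp at hat3
        have had : a ≠ d := by rintro rfl; simp at hat3
        rcases hK4 a b c' d hab hac had hbc hbd hcd with h | h | h | h | h | h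
        · exact hz a haS b hbS hab h
        · exact hz a haS c' hcS hac h
        · exact hz a haS d hdS had h
        · exact hz b hbS c' hcS hbc h
        · exact hz b hbS d hdS hbd h
        · exact hz c' hcS d hdS hcd h
      have h03 : S.card = 0 ∨ S.card = 1 ∨ S.card = 2 ∨ S.card = 3 := by omega
      rcases h03 with h | h | h | h
      · rw [Finset.card_eq_zero] at h; subst h; simp at hsum
      · obtain ⟨a, rfl⟩ := Finset.card_eq_one.mp h
        simp [hdiag a]
        norm_num
      · obtain ⟨a, b, hab, rfl⟩ := Finset.card_eq_two.mp h
        exact base2 c hsym hdiag hle a b hab x hx hsum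
      · obtain ⟨a, b, d, hab, had, hbd, rfl⟩ := Finset.card_eq_three.mp h
        exact base3 c hsym hdiag hle hH a b d hab had hbd x hx hsum

end Aux

/-- If `G` is an `n`-vertex `K₄`-free graph with edge weights in `(0,1]` containing
no triangle all of whose edges have weight `> 3/4`, then `w(G) ≤ 8/13 + δ` for
large `n`. -/
theorem K4free_no_heavy_triangle (δ : ℝ) (hδ : 0 < δ) :
    ∃ n₀ : ℕ, ∀ (n : ℕ) (G : SimpleGraph (Fin n)) (w : Fin n → Fin n → ℝ),
      n₀ ≤ n → G.CliqueFree 4 →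
      (∀ u v, w u v = w v u) →
      (∀ u v, G.Adj u v → 0 < w u v ∧ w u v ≤ 1) →
      (¬ ∃ x y z : Fin n, G.Adj x y ∧ G.Adj y z ∧ G.Adj x z ∧
        3 / 4 < w x y ∧ 3 / 4 < w y z ∧ 3 / 4 < w x z) →
      wSum G w ≤ 8 / 13 + δ := by
  refine ⟨1, ?_⟩
  intro n G w hn hK4free hwsym hw01 hnh
  have hn0 : 0 < n := hn
  have hnR : (0 : ℝ) < (n : ℝ) := by exact_mod_cast hn0
  set c : Fin n → Fin n → ℝ :=
    fun u v => if G.Adj u v then (if 3/4 < w u v then 4 else 3) else 0 with hc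
  have hsym : ∀ a b, c a b = c b a := by
    intro a b
    simp only [hc]
    rw [hwsym a b, SimpleGraph.adj_comm]
  have hdiag : ∀ a, c a a = 0 := by
    intro a; simp [hc]
  have hle : ∀ a b, c a b ≤ 4 := by
    intro a b; simp only [hc]; split_ifs <;> norm_num
  have hadj : ∀ p q, c p q ≠ 0 → G.Adj p q := by
    intro p q h
    by_contra hna
    simp [hc, hna] at h
  have hheavy : ∀ p q, 3 < c p q → G.Adj p q ∧ 3/4 < w p q := by
    intro p q h
    simp only [hc] at h
    split_ifs at h with h1 h2
    · exact ⟨h1, h2⟩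
    · norm_num at h
    · norm_num at h
  have hK4 : ∀ a b c' d : Fin n, a ≠ b → a ≠ c' → a ≠ d → b ≠ c' → b ≠ d → c' ≠ d →
      c a b = 0 ∨ c a c' = 0 ∨ c a d = 0 ∨ c b c' = 0 ∨ c b d = 0 ∨ c c' d = 0 := by
    intro a b c' d hab hac had hbc hbd hcd
    by_contra h
    push_neg at h
    obtain ⟨h1, h2, h3, h4, h5, h6⟩ := h
    have hab' := hadj _ _ h1
    have hac' := hadj _ _ h2
    have had' := hadj _ _ h3
    have hbc' := hadj _ _ h4
    have hbd' := hadj _ _ h5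
    have hcd' := hadj _ _ h6
    refine hK4free {a, b, c', d} ⟨?_, ?_⟩
    · intro p hp q hq hpq
      simp only [Finset.coe_insert, Finset.coe_singleton, Set.mem_insert_iff,
        Set.mem_singleton_iff] at hp hq
      rcases hp with rfl | rfl | rfl | rfl <;> rcases hq with rfl | rfl | rfl | rfl <;>
        first
          | exact absurd rfl hpq
          | assumption
          | exact hab'.symm
          | exact hac'.symm
          | exact had'.symm
          | exact hbc'.symm
          | exact hbd'.symm
          | exact hcd'.symm
    · rw [Finset.card_insert_of_notMem (by simp [hab, hac, had]),
        Finset.card_insert_of_notMem (by simp [hbc, hbd]),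
        Finset.card_insert_of_notMem (by simp [hcd]),
        Finset.card_singleton]
  have hH : ∀ a b d : Fin n, a ≠ b → a ≠ d → b ≠ d →
      c a b ≤ 3 ∨ c a d ≤ 3 ∨ c b d ≤ 3 := by
    intro a b d _ _ _
    by_contra h
    push_neg at h
    obtain ⟨h1, h2, h3⟩ := h
    have q1 := hheavy _ _ h1
    have q2 := hheavy _ _ h2
    have q3 := hheavy _ _ h3
    exact hnh ⟨a, b, d, q1.1, q3.1, q2.1, q1.2, q3.2, q2.2⟩
  -- apply the key bound with the uniform distribution
  have hxnn : ∀ i : Fin n, (0:ℝ) ≤ (n : ℝ)⁻¹ := fun _ => by positivity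
  have hxsum : ∑ _i : Fin n, (n:ℝ)⁻¹ = 1 := by
    rw [Finset.sum_const, Finset.card_univ, Fintype.card_fin, nsmul_eq_mul]
    field_simp
  have hkey := key_induction c hsym hdiag hle hK4 hH n Finset.univ
    (fun _ => (n:ℝ)⁻¹) (by simp) (fun i => hxnn i) hxsum
  -- rewrite hkey as (∑∑ c) * (n⁻¹ * n⁻¹) ≤ 32/13
  set Sc : ℝ := ∑ a : Fin n, ∑ b : Fin n, c a b with hSc
  have hkey2 : Sc * ((n:ℝ)⁻¹ * (n:ℝ)⁻¹) ≤ 32/13 := by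
    have : Sc * ((n:ℝ)⁻¹ * (n:ℝ)⁻¹)
        = ∑ a : Fin n, ∑ b : Fin n, c a b * (n:ℝ)⁻¹ * (n:ℝ)⁻¹ := by
      rw [hSc, Finset.sum_mul]
      refine Finset.sum_congr rfl (fun a _ => ?_)
      rw [Finset.sum_mul]
      refine Finset.sum_congr rfl (fun b _ => ?_)
      ring
    rw [this]
    exact hkey
  have hn2 : ((n:ℝ)⁻¹ * (n:ℝ)⁻¹) * (n:ℝ)^2 = 1 := by
    field_simp
  have hSc_le : Sc ≤ 32/13 * (n:ℝ)^2 := by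
    have h1 : Sc = Sc * ((n:ℝ)⁻¹ * (n:ℝ)⁻¹) * (n:ℝ)^2 := by
      rw [mul_assoc, hn2, mul_one]
    rw [h1]
    exact mul_le_mul_of_nonneg_right hkey2 (by positivity)
  -- pointwise bound on weights
  have hpt : ∀ u v : Fin n, (if G.Adj u v then w u v else 0) ≤ c u v / 4 := by
    intro u v
    simp only [hc]
    split_ifs with h1 h2
    · norm_num
      linarith [(hw01 u v h1).2]
    · norm_num
      exact le_of_not_gt h2
    · norm_num
  have hSw : ∑ u : Fin n, ∑ v : Fin n, (if G.Adj u v then w u v else 0) ≤ Sc / 4 := by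
    rw [hSc]
    calc ∑ u : Fin n, ∑ v : Fin n, (if G.Adj u v then w u v else 0)
        ≤ ∑ u : Fin n, ∑ v : Fin n, c u v / 4 :=
          Finset.sum_le_sum (fun u _ => Finset.sum_le_sum (fun v _ => hpt u v))
      _ = (∑ u : Fin n, ∑ v : Fin n, c u v) / 4 := by
          rw [Finset.sum_div]
          exact Finset.sum_congr rfl (fun u _ => by rw [Finset.sum_div])
  have hfinal : wSum G w ≤ 8/13 := by
    rw [wSum]
    have hinv : (0:ℝ) ≤ ((n:ℝ)^2)⁻¹ := by positivity
    have step1 : ((n : ℝ) ^ 2)⁻¹ * ∑ u : Fin n, ∑ v : Fin n,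
        (if G.Adj u v then w u v else 0) ≤ ((n : ℝ) ^ 2)⁻¹ * (Sc / 4) :=
      mul_le_mul_of_nonneg_left hSw hinv
    have step2 : ((n : ℝ) ^ 2)⁻¹ * (Sc / 4)
        ≤ ((n : ℝ) ^ 2)⁻¹ * (32/13 * (n:ℝ)^2 / 4) := by
      apply mul_le_mul_of_nonneg_left _ hinv
      linarith
    have step3 : ((n : ℝ) ^ 2)⁻¹ * (32/13 * (n:ℝ)^2 / 4) = 8/13 := by
      field_simp
      ring
    linarith
  linarith
end

section
/- Let m ∈ ℕ, let A = (a_{ij}) be a dense symmetric m×m matrix with nonnegative real entries, and let u be optimal for A. Then: (a) a_{ij} > 0 for all 1 ≤ i < j ≤ m; (b) u_i > 0 for every i ∈ [m]; (c) ∑_{i ∈ [m], i ≠ j} a_{ij}·u_i = g(A) for every j ∈ [m]. -/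
open Finset
open scoped Classical

/-- The Lagrangian-type quantity
`g(A) = max { uᵀAu : u_i ≥ 0, ∑ u_i = 1 }`. -/
noncomputable def lagrangian {ι : Type} [Fintype ι] (A : ι → ι → ℝ) : ℝ :=
  sSup {x : ℝ | ∃ u : ι → ℝ, (∀ i, 0 ≤ u i) ∧ (∑ i, u i = 1) ∧
    x = ∑ i, ∑ j, u i * A i j * u j}

/-- `A` is dense: zero diagonal, and deleting any row and the corresponding
column strictly decreases `g`. -/
def IsDenseMatrix {ι : Type} [Fintype ι] (A : ι → ι → ℝ) : Prop :=
  (∀ i, A i i = 0) ∧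
  ∀ i : ι, lagrangian (fun a b : {j : ι // j ≠ i} => A a b) < lagrangian A

/-!
If an optimal `u` had `u i = 0`, deleting coordinate `i` would give `g(A') ≥ g(A)`, contradicting
density; so `u > 0`. Moving mass `t` from coordinate `k` to `j` changes `uᵀAu` by
`2t((Au)_j - (Au)_k) + O(t²)`, so optimality and `u_k > 0` force `(Au)_j ≤ (Au)_k`; hence `Au` is
constant, and the constant is `uᵀAu = g(A)`. Finally, if `A_ij = 0` with `i ≠ j`, moving all of
`u_j` onto `i` changes `uᵀAu` by `u_j² (A_ii + A_jj - 2 A_ij) = 0`, so it produces an optimal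
vector with a zero entry, which is impossible.
-/

open Matrix Filter Topology

variable {ι : Type} [Fintype ι] {A : Matrix ι ι ℝ} {u : ι → ℝ}

def IsOptimal (A : Matrix ι ι ℝ) (u : ι → ℝ) : Prop :=
  u ∈ stdSimplex ℝ ι ∧ u ⬝ᵥ A *ᵥ u = lagrangian A

lemma dotProduct_mulVec_self_eq_sum_sum (A : Matrix ι ι ℝ) (u : ι → ℝ) :
    u ⬝ᵥ A *ᵥ u = ∑ i, ∑ j, u i * A i j * u j := by
  simp only [dotProduct, mulVec, mul_sum, mul_assoc]

lemma dotProduct_mulVec_le_lagrangian (A : Matrix ι ι ℝ) (hu : u ∈ stdSimplex ℝ ι) :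
    u ⬝ᵥ A *ᵥ u ≤ lagrangian A := by
  have hbdd : BddAbove ((fun v => v ⬝ᵥ A *ᵥ v) '' stdSimplex ℝ ι) :=
    ((isCompact_stdSimplex ℝ ι).image (by fun_prop)).bddAbove
  refine le_csSup (hbdd.mono ?_) ⟨u, hu.1, hu.2, dotProduct_mulVec_self_eq_sum_sum A u⟩
  rintro x ⟨v, hv0, hv1, rfl⟩
  exact ⟨v, ⟨hv0, hv1⟩, dotProduct_mulVec_self_eq_sum_sum A v⟩

lemma dotProduct_mulVec_le_lagrangian_subtype_ne (A : Matrix ι ι ℝ) {i : ι}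
    (hu : u ∈ stdSimplex ℝ ι) (hui : u i = 0) :
    u ⬝ᵥ A *ᵥ u ≤ lagrangian (fun a b : {j : ι // j ≠ i} => A a b) := by
  have hv : (fun j : {j : ι // j ≠ i} => u j) ∈ stdSimplex ℝ _ :=
    ⟨fun j => hu.1 j, by rw [← hu.2, Fintype.sum_eq_add_sum_subtype_ne _ i, hui, zero_add]⟩
  convert dotProduct_mulVec_le_lagrangian (A.submatrix (↑) (↑)) hv using 1
  · simp only [dotProduct_mulVec_self_eq_sum_sum, Fintype.sum_eq_add_sum_subtype_ne _ i, hui,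
      zero_mul, mul_zero, sum_const_zero, zero_add, submatrix_apply]
  · rfl

lemma IsDenseMatrix.pos_of_isOptimal (hd : IsDenseMatrix A) (hu : IsOptimal A u) (i : ι) :
    0 < u i :=
  (hu.1.1 i).lt_of_ne fun hui =>
    (hd.2 i).not_ge (hu.2 ▸ dotProduct_mulVec_le_lagrangian_subtype_ne A hu.1 hui.symm)

lemma add_single_sub_single_mem_stdSimplex (hu : u ∈ stdSimplex ℝ ι) (j k : ι)
    {t : ℝ} (ht : 0 ≤ t) (htk : t ≤ u k) :
    u + (Pi.single j t - Pi.single k t) ∈ stdSimplex ℝ ι := by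
  refine ⟨fun l => ?_, by simp [sum_add_distrib, hu.2]⟩
  have hj : 0 ≤ (Pi.single j t : ι → ℝ) l := by
    by_cases hlj : l = j <;> simp [hlj, ht]
  by_cases hlk : l = k
  · subst hlk
    simp only [Pi.add_apply, Pi.sub_apply, Pi.single_eq_same]
    linarith
  · simp only [Pi.add_apply, Pi.sub_apply, Pi.single_eq_of_ne hlk, sub_zero]
    linarith [hu.1 l]

lemma Matrix.IsSymm.dotProduct_mulVec_add (hA : A.IsSymm) (u v : ι → ℝ) :
    (u + v) ⬝ᵥ A *ᵥ (u + v) =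
      u ⬝ᵥ A *ᵥ u + 2 * (v ⬝ᵥ A *ᵥ u) + v ⬝ᵥ A *ᵥ v := by
  have hcomm : u ⬝ᵥ A *ᵥ v = v ⬝ᵥ A *ᵥ u := by
    rw [dotProduct_mulVec, ← hA, vecMul_transpose, hA, dotProduct_comm]
  simp only [mulVec_add, dotProduct_add, add_dotProduct, hcomm]
  ring

lemma Matrix.IsSymm.dotProduct_mulVec_add_single_sub_single (hA : A.IsSymm)
    (u : ι → ℝ) (j k : ι) (t : ℝ) :
    (u + (Pi.single j t - Pi.single k t)) ⬝ᵥ A *ᵥ (u + (Pi.single j t - Pi.single k t)) =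
      u ⬝ᵥ A *ᵥ u + 2 * t * ((A *ᵥ u) j - (A *ᵥ u) k) +
        t ^ 2 * (A j j + A k k - 2 * A j k) := by
  rw [hA.dotProduct_mulVec_add]
  simp only [sub_dotProduct, single_dotProduct, mulVec_sub, mulVec_single, Pi.sub_apply,
    Pi.smul_apply, col_apply, op_smul_eq_mul, hA.apply j k]
  ring

lemma nonpos_of_forall_mul_add_mul_sq_nonpos {a b δ : ℝ} (hδ : 0 < δ)
    (h : ∀ t, 0 < t → t ≤ δ → a * t + b * t ^ 2 ≤ 0) : a ≤ 0 := by
  have hlim : Tendsto (fun t => a + b * t) (𝓝[>] 0) (𝓝 a) := by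
    refine tendsto_nhdsWithin_of_tendsto_nhds ?_
    simpa using (by fun_prop : Continuous fun t : ℝ => a + b * t).tendsto 0
  refine le_of_tendsto hlim ?_
  filter_upwards [Ioc_mem_nhdsGT hδ] with t ⟨ht0, htδ⟩
  have hneg := h t ht0 htδ
  nlinarith

lemma mulVec_le_of_isOptimal (hA : A.IsSymm) (hu : IsOptimal A u) (j : ι) {k : ι}
    (hk : 0 < u k) : (A *ᵥ u) j ≤ (A *ᵥ u) k := by
  have hmove : ∀ t, 0 < t → t ≤ u k →
      2 * ((A *ᵥ u) j - (A *ᵥ u) k) * t + (A j j + A k k - 2 * A j k) * t ^ 2 ≤ 0 := by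
    intro t ht htk
    have hle := dotProduct_mulVec_le_lagrangian A
      (add_single_sub_single_mem_stdSimplex hu.1 j k ht.le htk)
    rw [hA.dotProduct_mulVec_add_single_sub_single, hu.2] at hle
    linarith
  linarith [nonpos_of_forall_mul_add_mul_sq_nonpos hk hmove]

lemma mulVec_eq_lagrangian_of_isOptimal (hA : A.IsSymm) (hu : IsOptimal A u)
    (hpos : ∀ i, 0 < u i) (j : ι) : (A *ᵥ u) j = lagrangian A := by
  have hconst : ∀ k, (A *ᵥ u) k = (A *ᵥ u) j := fun k =>
    (mulVec_le_of_isOptimal hA hu k (hpos j)).antisymm (mulVec_le_of_isOptimal hA hu j (hpos k))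
  calc (A *ᵥ u) j = ∑ k, u k * (A *ᵥ u) j := by rw [← sum_mul, hu.1.2, one_mul]
    _ = u ⬝ᵥ A *ᵥ u := by simp only [dotProduct, hconst]
    _ = lagrangian A := hu.2

lemma IsDenseMatrix.ne_zero_of_isOptimal (hd : IsDenseMatrix A) (hA : A.IsSymm)
    (hu : IsOptimal A u) {i j : ι} (hij : i ≠ j) : A i j ≠ 0 := by
  intro hAij
  have hpos := hd.pos_of_isOptimal hu
  set w := u + (Pi.single i (u j) - Pi.single j (u j))
  have hw : IsOptimal A w := by
    refine ⟨add_single_sub_single_mem_stdSimplex hu.1 i j (hu.1.1 j) le_rfl, ?_⟩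
    rw [hA.dotProduct_mulVec_add_single_sub_single, mulVec_eq_lagrangian_of_isOptimal hA hu hpos,
      mulVec_eq_lagrangian_of_isOptimal hA hu hpos, hd.1 i, hd.1 j, hAij, hu.2]
    ring
  have hwj : w j = 0 := by simp [w, hij.symm]
  exact (hd.pos_of_isOptimal hw j).ne' hwj

/-- Lemma (Liu–Reiher–Sharifzadeh–Staden): if `A` is a dense symmetric matrix with
nonnegative entries and `u` is optimal for `A`, then (a) all off-diagonal entries of
`A` are positive, (b) all entries of `u` are positive, and
(c) `∑_{i ≠ j} a_{ij} u_i = g(A)` for every `j`. -/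
theorem dense_matrix_optimal_vector (m : ℕ) (A : Fin m → Fin m → ℝ)
    (hsymm : ∀ i j, A i j = A j i) (hnonneg : ∀ i j, 0 ≤ A i j)
    (hdense : IsDenseMatrix A)
    (u : Fin m → ℝ) (hu0 : ∀ i, 0 ≤ u i) (hu1 : ∑ i, u i = 1)
    (hopt : ∑ i, ∑ j, u i * A i j * u j = lagrangian A) :
    (∀ i j : Fin m, i < j → 0 < A i j) ∧
    (∀ i, 0 < u i) ∧
    (∀ j : Fin m, ∑ i ∈ univ.filter (· ≠ j), A i j * u i = lagrangian A) := by
  have hA : Matrix.IsSymm (n := Fin m) A := IsSymm.ext fun i j => hsymm j i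
  have hu : IsOptimal A u :=
    ⟨⟨hu0, hu1⟩, (dotProduct_mulVec_self_eq_sum_sum A u).trans hopt⟩
  have hpos := hdense.pos_of_isOptimal hu
  refine ⟨fun i j hij => (hnonneg i j).lt_of_ne' (hdense.ne_zero_of_isOptimal hA hu hij.ne),
    hpos, fun j => ?_⟩
  rw [filter_ne', sum_erase _ (by rw [hdense.1 j, zero_mul]),
    ← mulVec_eq_lagrangian_of_isOptimal hA hu hpos j]
  exact sum_congr rfl fun i _ => by rw [hsymm i j]
end
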